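/- arXiv:2203.04503 — 6 statements merged into one kernel-verified Lean document; each statement's English description precedes it below -/
import Mathlib

section
/- In the two-prosumer example with a = 1, c > 0, D₁ - D₂ ≥ (2c+1)F/c: for every b̄₂ ∈ [2cD₂ + 2cF, 2cD₁ - 2(c+1)F] the point (b̄₁, b̄₂) with b̄₁ = b̄₂ + 2F satisfies the congested best-response conditions b̄₁ = b̄₂ + 2F (valid since b̄₂ ≤ 2cD₁ - 2(c+1)F) and b̄₂ = b̄₁ - 2F (valid since b̄₁ ≥ 2cD₂ + 2(c+1)F); in particular the interval of such b̄₂ is nonempty, so there are uncountably many equilibria. -/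
/-- Two-prosumer congested case (a=1, D₁-D₂ ≥ (2c+1)F/c): every
b̄₂ ∈ [2cD₂+2cF, 2cD₁-2(c+1)F], with b̄₁ = b̄₂+2F, satisfies the congested
best-response validity conditions, and the interval is nonempty. -/
theorem stmt5 (c F D₁ D₂ : ℝ) (hc : 0 < c) (hF : 0 < F)
    (hgap : (2 * c + 1) * F / c ≤ D₁ - D₂) :
    (Set.Nonempty (Set.Icc (2 * c * D₂ + 2 * c * F) (2 * c * D₁ - 2 * (c + 1) * F))) ∧
    (∀ b₂ ∈ Set.Icc (2 * c * D₂ + 2 * c * F) (2 * c * D₁ - 2 * (c + 1) * F),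
      ∀ b₁, b₁ = b₂ + 2 * F →
        b₂ ≤ 2 * c * D₁ - 2 * (c + 1) * F ∧
        2 * c * D₂ + 2 * (c + 1) * F ≤ b₁ ∧
        b₂ = b₁ - 2 * F) := by
  have key : (2 * c + 1) * F ≤ c * (D₁ - D₂) := by
    rw [div_le_iff₀ hc] at hgap; linarith [hgap]
  constructor
  · rw [Set.nonempty_Icc]; nlinarith
  · rintro b₂ ⟨h1, h2⟩ b₁ rfl
    refine ⟨h2, by linarith, by ring⟩
end

section
/- Let J(p) = Σᵢ(cᵢpᵢ² + dᵢpᵢ) and Ω(p) = Σᵢ(Dᵢ - pᵢ)², with cᵢ > 0, a > 0, I ≥ 2. Let p̃ minimize J over a nonempty convex set S and p̄ minimize J(p) + Ω(p)/(2a(I-1)) over S. Suppose (Dᵢ - p̃ᵢ)² ≤ C₁ and (Dᵢ - p̄ᵢ)² ≤ C₁ for all i, and J(p̃) ≥ C₂·I with C₂ > 0 (i.e., each term Jᵢ(p̃ᵢ) ≥ C₂ > 0). Then 1 ≤ J(p̄)/J(p̃) ≤ 1 + C₁/(2a(I-1)C₂). -/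
open Finset

/-- Price of anarchy bound. With J(p)=Σᵢ(cᵢpᵢ²+dᵢpᵢ), Ω(p)=Σᵢ(Dᵢ-pᵢ)²,
p̃ a minimizer of J over S and p̄ a minimizer of J + Ω/(2a(I-1)) over S, uniform bounds
(Dᵢ-p̃ᵢ)² ≤ C₁, (Dᵢ-p̄ᵢ)² ≤ C₁, and Jᵢ(p̃ᵢ) ≥ C₂ > 0, we get
1 ≤ J(p̄)/J(p̃) ≤ 1 + C₁/(2a(I-1)C₂). -/
theorem stmt7 (I : ℕ) (hI : 2 ≤ I) (a : ℝ) (ha : 0 < a)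
    (c d D : Fin I → ℝ) (hc : ∀ i, 0 < c i)
    (J Ω : (Fin I → ℝ) → ℝ)
    (hJ : J = fun p => ∑ i, (c i * (p i) ^ 2 + d i * p i))
    (hΩ : Ω = fun p => ∑ i, (D i - p i) ^ 2)
    (S : Set (Fin I → ℝ)) (hconv : Convex ℝ S) (hne : S.Nonempty)
    (ptil pbar : Fin I → ℝ) (hptil : ptil ∈ S) (hpbar : pbar ∈ S)
    (hmin1 : ∀ p ∈ S, J ptil ≤ J p)
    (hmin2 : ∀ p ∈ S, J pbar + Ω pbar / (2 * a * ((I : ℝ) - 1)) ≤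
      J p + Ω p / (2 * a * ((I : ℝ) - 1)))
    (C₁ C₂ : ℝ) (hC₂ : 0 < C₂)
    (hb1 : ∀ i, (D i - ptil i) ^ 2 ≤ C₁)
    (hb2 : ∀ i, (D i - pbar i) ^ 2 ≤ C₁)
    (hb3 : ∀ i, C₂ ≤ c i * (ptil i) ^ 2 + d i * ptil i) :
    1 ≤ J pbar / J ptil ∧
    J pbar / J ptil ≤ 1 + C₁ / (2 * a * ((I : ℝ) - 1) * C₂) := by

  have hIpos : (0:ℝ) < (I : ℝ) := by positivity
  have hI1 : (0:ℝ) < (I : ℝ) - 1 := by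
    have : (2:ℝ) ≤ (I:ℝ) := by exact_mod_cast hI
    linarith
  have hden : (0:ℝ) < 2 * a * ((I : ℝ) - 1) := by positivity
  have hJtil : C₂ * I ≤ J ptil := by
    rw [hJ]
    calc C₂ * I = ∑ _i : Fin I, C₂ := by
          rw [Finset.sum_const, Finset.card_univ, Fintype.card_fin, nsmul_eq_mul, mul_comm]
      _ ≤ _ := Finset.sum_le_sum (fun i _ => hb3 i)
  have hJtilpos : 0 < J ptil := lt_of_lt_of_le (by positivity) hJtil
  have h1 : J ptil ≤ J pbar := hmin1 pbar hpbar
  have hΩtil : Ω ptil ≤ C₁ * I := by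
    rw [hΩ]
    calc ∑ i, (D i - ptil i) ^ 2 ≤ ∑ _i : Fin I, C₁ :=
          Finset.sum_le_sum (fun i _ => hb1 i)
      _ = C₁ * I := by
          rw [Finset.sum_const, Finset.card_univ, Fintype.card_fin, nsmul_eq_mul, mul_comm]
  have hΩbar : 0 ≤ Ω pbar := by
    rw [hΩ]; positivity
  have h2 := hmin2 ptil hptil
  have hkey : J pbar ≤ J ptil + C₁ * I / (2 * a * ((I : ℝ) - 1)) := by
    have hdiv : Ω ptil / (2 * a * ((I:ℝ) - 1)) ≤ C₁ * I / (2 * a * ((I:ℝ) - 1)) := by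
      gcongr
    have hdiv2 : 0 ≤ Ω pbar / (2 * a * ((I:ℝ) - 1)) := div_nonneg hΩbar hden.le
    linarith
  constructor
  · rw [le_div_iff₀ hJtilpos]; linarith
  · rw [div_le_iff₀ hJtilpos]
    have hC₁ : 0 ≤ C₁ := le_trans (by positivity) (hb1 ⟨0, by omega⟩)
    have hfin : C₁ * I / (2 * a * ((I:ℝ) - 1)) ≤ C₁ / (2 * a * ((I:ℝ) - 1) * C₂) * J ptil := by
      rw [div_le_iff₀ hden] at *
      have h3 : C₁ / (2 * a * ((I:ℝ) - 1) * C₂) * J ptil * (2 * a * ((I:ℝ)-1))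
          = C₁ * J ptil / C₂ := by
        field_simp
      rw [h3]
      rw [le_div_iff₀ hC₂]
      calc C₁ * (I:ℝ) * C₂ = C₁ * (C₂ * I) := by ring
        _ ≤ C₁ * J ptil := by nlinarith
    nlinarith
end

section
/- Let Q ⊆ ℝ^I be a nonempty closed convex set and q(b) the Euclidean projection of b onto Q. For any i and any b, b' ∈ ℝ^I differing only in the i-th coordinate with b'ᵢ > bᵢ, the projections satisfy qᵢ(b') ≥ qᵢ(b), i.e., the i-th coordinate of the projection is monotone nondecreasing in the i-th coordinate of the input. -/
/-! A nearest-point map onto a convex set is firmly nonexpansive: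
`‖q b' - q b‖² ≤ ⟪b' - b, q b' - q b⟫`, which follows by adding the variational inequalities
characterizing `q b` and `q b'`. When `b' - b` is a positive multiple of the `i`-th basis vector,
the right-hand side is `(b' i - b i) * (q b' i - q b i)`, so this factor is nonnegative. -/

open scoped RealInnerProductSpace

section FirmlyNonexpansive

variable {F : Type*} [NormedAddCommGroup F] [InnerProductSpace ℝ F] {K : Set F}

theorem real_inner_le_zero_of_forall_norm_sub_le (hK : Convex ℝ K) {u v : F} (hv : v ∈ K)
    (hmin : ∀ w ∈ K, ‖u - v‖ ≤ ‖u - w‖) : ∀ w ∈ K, ⟪u - v, w - v⟫ ≤ 0 := by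
  have : Nonempty K := ⟨⟨v, hv⟩⟩
  rw [← norm_eq_iInf_iff_real_inner_le_zero hK hv]
  exact le_antisymm (le_ciInf fun w ↦ hmin w w.2)
    (ciInf_le ⟨0, Set.forall_mem_range.2 fun _ ↦ norm_nonneg _⟩ (⟨v, hv⟩ : K))

theorem norm_sub_sq_le_real_inner_of_forall_norm_sub_le (hK : Convex ℝ K) {u u' v v' : F}
    (hv : v ∈ K) (hv' : v' ∈ K) (hmin : ∀ w ∈ K, ‖u - v‖ ≤ ‖u - w‖)
    (hmin' : ∀ w ∈ K, ‖u' - v'‖ ≤ ‖u' - w‖) :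
    ‖v' - v‖ ^ 2 ≤ ⟪u' - u, v' - v⟫ := by
  have hvi : ⟪u - v, v' - v⟫ ≤ 0 := real_inner_le_zero_of_forall_norm_sub_le hK hv hmin v' hv'
  have hvi' : 0 ≤ ⟪u' - v', v' - v⟫ := by
    have := real_inner_le_zero_of_forall_norm_sub_le hK hv' hmin' v hv
    rwa [← neg_sub v' v, inner_neg_right, neg_nonpos] at this
  have hsplit : ⟪u' - u, v' - v⟫ = ‖v' - v‖ ^ 2 + ⟪u' - v', v' - v⟫ - ⟪u - v, v' - v⟫ := by
    rw [← real_inner_self_eq_norm_sq, ← inner_add_left, ← inner_sub_left]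
    congr 1
    abel
  linarith

end FirmlyNonexpansive

theorem EuclideanSpace.sub_eq_single_of_forall_ne {𝕜 ι : Type*} [RCLike 𝕜] [Fintype ι]
    [DecidableEq ι] {x y : EuclideanSpace 𝕜 ι} {i : ι} (h : ∀ j, j ≠ i → x j = y j) :
    x - y = EuclideanSpace.single i (x i - y i) := by
  ext j
  by_cases hj : j = i
  · subst hj
    simp
  · simp [hj, h j hj]

theorem stmt10_general (I : ℕ) (Q : Set (EuclideanSpace ℝ (Fin I)))
    (hQconv : Convex ℝ Q)
    (q : EuclideanSpace ℝ (Fin I) → EuclideanSpace ℝ (Fin I))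
    (hproj : ∀ b, q b ∈ Q ∧ ∀ y ∈ Q, ‖b - q b‖ ≤ ‖b - y‖)
    (i : Fin I) (b b' : EuclideanSpace ℝ (Fin I))
    (hdiff : ∀ j, j ≠ i → b' j = b j) (hlt : b i < b' i) :
    q b i ≤ q b' i := by
  have hfirm : ‖q b' - q b‖ ^ 2 ≤ ⟪b' - b, q b' - q b⟫ :=
    norm_sub_sq_le_real_inner_of_forall_norm_sub_le hQconv (hproj b).1 (hproj b').1
      (hproj b).2 (hproj b').2
  have hcoord : ⟪b' - b, q b' - q b⟫ = (b' i - b i) * (q b' i - q b i) := by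
    rw [EuclideanSpace.sub_eq_single_of_forall_ne hdiff, EuclideanSpace.inner_single_left]
    simp
  have hprod : 0 ≤ (b' i - b i) * (q b' i - q b i) := hcoord ▸ (sq_nonneg _).trans hfirm
  exact sub_nonneg.1 ((mul_nonneg_iff_of_pos_left (sub_pos.2 hlt)).1 hprod)

/-- For Euclidean projection q(·) onto a nonempty closed convex set
Q ⊆ ℝ^I, if b and b' differ only in coordinate i with b'ᵢ > bᵢ, then
qᵢ(b') ≥ qᵢ(b). -/
theorem stmt10 (I : ℕ) (Q : Set (EuclideanSpace ℝ (Fin I)))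
    (hQne : Q.Nonempty) (hQc : IsClosed Q) (hQconv : Convex ℝ Q)
    (q : EuclideanSpace ℝ (Fin I) → EuclideanSpace ℝ (Fin I))
    (hproj : ∀ b, q b ∈ Q ∧ ∀ y ∈ Q, ‖b - q b‖ ≤ ‖b - y‖)
    (i : Fin I) (b b' : EuclideanSpace ℝ (Fin I))
    (hdiff : ∀ j, j ≠ i → b' j = b j) (hlt : b i < b' i) :
    q b i ≤ q b' i :=
  stmt10_general I Q hQconv q hproj i b b' hdiff hlt
end

section
/- At the unique GNE of the improved energy sharing game, the clearing prices satisfy λ̄ᵢ = -κ̄ - Σ_l π_{il}τ̄_l⁻ + Σ_l π_{il}τ̄_l⁺ for all i, where (κ̄, τ̄±) is any dual optimal (KKT multiplier) vector of the regularized centralized problem. Consequently the net payment Σᵢ λ̄ᵢ q̄ᵢ equals Σ_l F_l(τ̄_l⁻ + τ̄_l⁺) ≥ 0, where q̄ᵢ = Dᵢ - p̄ᵢ. -/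
open Finset

/-- At the GNE of the improved game, the prices
λ̄ᵢ = 2cᵢp̄ᵢ + dᵢ - (Dᵢ-p̄ᵢ)/(a(I-1)) admit the LMP-like representation
λ̄ᵢ = -κ̄ - Σ_l π_{il}τ̄_l⁻ + Σ_l π_{il}τ̄_l⁺ from any KKT multipliers of the
regularized problem, and the net payment Σᵢ λ̄ᵢ(Dᵢ-p̄ᵢ) = Σ_l F_l(τ̄_l⁻+τ̄_l⁺) ≥ 0. -/
theorem stmt12 (I L : ℕ) (hI : 2 ≤ I) (a : ℝ) (ha : 0 < a)
    (c d D : Fin I → ℝ) (hc : ∀ i, 0 < c i)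
    (F : Fin L → ℝ) (hF : ∀ l, 0 ≤ F l) (π : Fin I → Fin L → ℝ)
    (pbar : Fin I → ℝ) (κ : ℝ) (τm τp : Fin L → ℝ)
    (hstat : ∀ i, 2 * c i * pbar i + d i - (D i - pbar i) / (a * ((I : ℝ) - 1)) + κ +
      (∑ l, π i l * (τm l - τp l)) = 0)
    (hbal : (∑ i, pbar i) = (∑ i, D i))
    (hfeas : ∀ l, -F l ≤ (∑ i, π i l * (D i - pbar i)) ∧
      (∑ i, π i l * (D i - pbar i)) ≤ F l)
    (hτm : ∀ l, 0 ≤ τm l) (hτp : ∀ l, 0 ≤ τp l)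
    (hcsm : ∀ l, τm l * (F l + ∑ i, π i l * (D i - pbar i)) = 0)
    (hcsp : ∀ l, τp l * (F l - ∑ i, π i l * (D i - pbar i)) = 0)
    (lam : Fin I → ℝ)
    (hlam : ∀ i, lam i = 2 * c i * pbar i + d i - (D i - pbar i) / (a * ((I : ℝ) - 1))) :
    (∀ i, lam i = -κ - (∑ l, π i l * τm l) + (∑ l, π i l * τp l)) ∧
    (∑ i, lam i * (D i - pbar i)) = (∑ l, F l * (τm l + τp l)) ∧
    0 ≤ (∑ l, F l * (τm l + τp l)) := by
  have hrep : ∀ i, lam i = -κ - (∑ l, π i l * τm l) + (∑ l, π i l * τp l) := by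
    intro i
    have h := hstat i
    have h2 : lam i = -κ - ∑ l, π i l * (τm l - τp l) := by
      rw [hlam i]; linarith
    rw [h2]
    simp only [mul_sub, Finset.sum_sub_distrib]
    ring
  have hq : (∑ i, (D i - pbar i)) = 0 := by
    rw [Finset.sum_sub_distrib]; linarith
  have hswap : ∀ (g : Fin L → ℝ),
      (∑ i, (∑ l, π i l * g l) * (D i - pbar i)) =
      ∑ l, g l * (∑ i, π i l * (D i - pbar i)) := by
    intro g
    calc ∑ i, (∑ l, π i l * g l) * (D i - pbar i)
        = ∑ i, ∑ l, g l * (π i l * (D i - pbar i)) := by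
          apply Finset.sum_congr rfl; intro i _
          rw [Finset.sum_mul]
          exact Finset.sum_congr rfl fun l _ => by ring
      _ = ∑ l, ∑ i, g l * (π i l * (D i - pbar i)) := Finset.sum_comm
      _ = ∑ l, g l * (∑ i, π i l * (D i - pbar i)) := by
          exact Finset.sum_congr rfl fun l _ => (Finset.mul_sum _ _ _).symm
  refine ⟨hrep, ?_, ?_⟩
  · calc ∑ i, lam i * (D i - pbar i)
        = ∑ i, (-κ * (D i - pbar i) - (∑ l, π i l * τm l) * (D i - pbar i)
            + (∑ l, π i l * τp l) * (D i - pbar i)) := by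
          apply Finset.sum_congr rfl; intro i _
          rw [hrep i]; ring
      _ = -κ * (∑ i, (D i - pbar i)) - (∑ l, τm l * (∑ i, π i l * (D i - pbar i)))
            + (∑ l, τp l * (∑ i, π i l * (D i - pbar i))) := by
          rw [Finset.sum_add_distrib, Finset.sum_sub_distrib, ← Finset.mul_sum,
            hswap τm, hswap τp]
      _ = ∑ l, (τp l * (∑ i, π i l * (D i - pbar i))
            - τm l * (∑ i, π i l * (D i - pbar i))) := by
          rw [hq, mul_zero, Finset.sum_sub_distrib]; ring
      _ = ∑ l, F l * (τm l + τp l) := by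
          apply Finset.sum_congr rfl; intro l _
          have h1 := hcsm l; have h2 := hcsp l
          nlinarith [h1, h2]
  · apply Finset.sum_nonneg
    intro l _
    exact mul_nonneg (hF l) (add_nonneg (hτm l) (hτp l))
end

section
/- Fix I ≥ 2, a > 0, cᵢ > 0, and suppose at the GNE each prosumer i has bid b̄ᵢ = Dᵢ - p̄ᵢ + aλ̄ᵢ with λ̄ᵢ = 2cᵢp̄ᵢ + dᵢ - (Dᵢ - p̄ᵢ)/(a(I-1)). Define prosumer i's cost at the GNE as Γ̄ᵢ = cᵢp̄ᵢ² + dᵢp̄ᵢ + λ̄ᵢ(Dᵢ - p̄ᵢ). Then Γ̄ᵢ - (cᵢDᵢ² + dᵢDᵢ) = -(cᵢ + 1/(a(I-1)))·(Dᵢ - p̄ᵢ)² ≤ 0; hence each prosumer's cost at the GNE is at most its self-sufficiency cost Jᵢ(Dᵢ). -/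
/-- Individual rationality at the GNE. With
λ̄ᵢ = 2cᵢp̄ᵢ + dᵢ - (Dᵢ-p̄ᵢ)/(a(I-1)), b̄ᵢ = Dᵢ - p̄ᵢ + aλ̄ᵢ, and
Γ̄ᵢ = cᵢp̄ᵢ² + dᵢp̄ᵢ + λ̄ᵢ(Dᵢ-p̄ᵢ), the cost gap satisfies
Γ̄ᵢ - (cᵢDᵢ²+dᵢDᵢ) = -(cᵢ + 1/(a(I-1)))(Dᵢ-p̄ᵢ)² ≤ 0. -/
theorem stmt18 (I : ℕ) (hI : 2 ≤ I) (a : ℝ) (ha : 0 < a)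
    (c d D pbar : Fin I → ℝ) (hc : ∀ i, 0 < c i)
    (lam b Γ : Fin I → ℝ)
    (hlam : ∀ i, lam i = 2 * c i * pbar i + d i - (D i - pbar i) / (a * ((I : ℝ) - 1)))
    (hb : ∀ i, b i = D i - pbar i + a * lam i)
    (hΓ : ∀ i, Γ i = c i * (pbar i) ^ 2 + d i * pbar i + lam i * (D i - pbar i)) :
    ∀ i, Γ i - (c i * (D i) ^ 2 + d i * D i) =
        -(c i + 1 / (a * ((I : ℝ) - 1))) * (D i - pbar i) ^ 2 ∧
      Γ i ≤ c i * (D i) ^ 2 + d i * D i := by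
  intro i
  have hI1 : (1 : ℝ) ≤ (I : ℝ) - 1 := by
    have : (2 : ℝ) ≤ (I : ℝ) := by exact_mod_cast hI
    linarith
  have hden : a * ((I : ℝ) - 1) ≠ 0 := by positivity
  have key : Γ i - (c i * (D i) ^ 2 + d i * D i) =
      -(c i + 1 / (a * ((I : ℝ) - 1))) * (D i - pbar i) ^ 2 := by
    rw [hΓ, hlam]
    field_simp
    ring
  refine ⟨key, ?_⟩
  have hpos : 0 ≤ (c i + 1 / (a * ((I : ℝ) - 1))) * (D i - pbar i) ^ 2 := by
    have : 0 < a * ((I : ℝ) - 1) := by positivity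
    have := hc i
    positivity
  linarith [key]
end

section
/- Let C ∈ ℝ^{I×L} be the incidence matrix of a connected radial (tree) network with I nodes and L = I-1 edges, B a diagonal matrix with positive diagonal entries, and C̃ the matrix obtained from C by deleting its last row. Then C̃BC̃ᵀ is invertible, and the L columns of the matrix Π (obtained from -[(C̃BC̃ᵀ)⁻¹C̃B] by appending a zero row) together with the all-ones vector 1_I are linearly independent in ℝ^I. -/
open Finset Matrix

/-- For the incidence matrix C of a connected radial (tree) network with
I = L+1 nodes and L edges (each column has one +1, one -1, rest 0; connectedness given by
rank C = L), B a positive diagonal matrix, and C̃ obtained by deleting the last row of C: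
C̃BC̃ᵀ is invertible, and the L columns of Π = [-(C̃BC̃ᵀ)⁻¹C̃B ; 0] together with the
all-ones vector are linearly independent in ℝ^{L+1}. -/
theorem stmt19 (L : ℕ) (C : Matrix (Fin (L + 1)) (Fin L) ℝ)
    (hinc : ∀ l, ∃ u v : Fin (L + 1), u ≠ v ∧ C u l = 1 ∧ C v l = -1 ∧
      ∀ i, i ≠ u → i ≠ v → C i l = 0)
    (hconn : C.rank = L)
    (β : Fin L → ℝ) (hβ : ∀ l, 0 < β l)
    (B : Matrix (Fin L) (Fin L) ℝ) (hB : B = Matrix.diagonal β)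
    (Ct : Matrix (Fin L) (Fin L) ℝ) (hCt : ∀ i l, Ct i l = C i.castSucc l)
    (Pi0 : Matrix (Fin (L + 1)) (Fin L) ℝ)
    (hPitop : ∀ (i : Fin L) (l : Fin L),
      Pi0 i.castSucc l = (-((Ct * B * Ctᵀ)⁻¹ * Ct * B)) i l)
    (hPibot : ∀ l, Pi0 (Fin.last L) l = 0) :
    IsUnit (Ct * B * Ctᵀ) ∧
    LinearIndependent ℝ
      (Fin.cons (fun _ => (1 : ℝ)) (fun l i => Pi0 i l) :
        Fin (L + 1) → (Fin (L + 1) → ℝ)) := by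
  -- column sums of C are zero
  have hcolsum : ∀ l, ∑ i, C i l = 0 := by
    intro l
    obtain ⟨u, v, huv, hu, hv, h0⟩ := hinc l
    have : ∑ i ∈ ({u, v} : Finset (Fin (L + 1))), C i l = ∑ i, C i l :=
      Finset.sum_subset (Finset.subset_univ _) (by
        intro i _ hi
        simp only [Finset.mem_insert, Finset.mem_singleton, not_or] at hi
        exact h0 i hi.1 hi.2)
    rw [← this, Finset.sum_pair huv, hu, hv]
    ring
  -- C.mulVec is injective at 0
  have hCker : ∀ x : Fin L → ℝ, C.mulVec x = 0 → x = 0 := by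
    intro x hx
    have hker : LinearMap.ker C.mulVecLin = ⊥ := by
      have h1 := LinearMap.finrank_range_add_finrank_ker C.mulVecLin
      have h2 : Module.finrank ℝ (Fin L → ℝ) = L := by simp
      rw [h2] at h1
      have h3 : Module.finrank ℝ (LinearMap.range C.mulVecLin) = L := hconn
      have h4 : Module.finrank ℝ (LinearMap.ker C.mulVecLin) = 0 := by omega
      exact Submodule.finrank_eq_zero.mp h4
    have : x ∈ LinearMap.ker C.mulVecLin := hx
    rw [hker] at this
    simpa using this
  -- Ct.mulVec is injective at 0
  have hCtker : ∀ x : Fin L → ℝ, Ct.mulVec x = 0 → x = 0 := by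
    intro x hx
    apply hCker
    funext i
    induction i using Fin.lastCases with
    | last =>
      -- last row: use that rows sum to zero
      have hsum : ∑ i, C.mulVec x i = 0 := by
        simp only [Matrix.mulVec, dotProduct]
        rw [Finset.sum_comm]
        refine Finset.sum_eq_zero fun l _ => ?_
        rw [← Finset.sum_mul, hcolsum l, zero_mul]
      rw [Fin.sum_univ_castSucc] at hsum
      have hz : ∀ i : Fin L, C.mulVec x i.castSucc = 0 := by
        intro i
        have := congrFun hx i
        simpa [Matrix.mulVec, dotProduct, hCt] using this
      simp only [hz, Finset.sum_const_zero, zero_add] at hsum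
      simpa using hsum
    | cast i =>
      have := congrFun hx i
      simpa [Matrix.mulVec, dotProduct, hCt] using this
  have hCtdet : Ct.det ≠ 0 := by
    intro h
    obtain ⟨v, hv, hv0⟩ := (Matrix.exists_mulVec_eq_zero_iff.mpr h)
    exact hv (hCtker v hv0)
  have hBdet : B.det ≠ 0 := by
    rw [hB, Matrix.det_diagonal]
    exact Finset.prod_ne_zero_iff.mpr fun l _ => (hβ l).ne'
  have hMdet : (Ct * B * Ctᵀ).det ≠ 0 := by
    simp only [Matrix.det_mul, Matrix.det_transpose]
    exact mul_ne_zero (mul_ne_zero hCtdet hBdet) hCtdet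
  have hM : IsUnit (Ct * B * Ctᵀ) := by
    rw [Matrix.isUnit_iff_isUnit_det]
    exact isUnit_iff_ne_zero.mpr hMdet
  refine ⟨hM, ?_⟩
  -- the top block is invertible
  set P : Matrix (Fin L) (Fin L) ℝ := -((Ct * B * Ctᵀ)⁻¹ * Ct * B) with hP
  have hPdet : P.det ≠ 0 := by
    rw [hP, Matrix.det_neg, Matrix.det_mul, Matrix.det_mul, Matrix.det_nonsing_inv]
    refine mul_ne_zero (by positivity) (mul_ne_zero (mul_ne_zero ?_ hCtdet) hBdet)
    rw [Ring.inverse_eq_inv]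
    exact inv_ne_zero hMdet
  rw [Fintype.linearIndependent_iff]
  intro g hg
  have hg' := fun j => congrFun hg j
  -- evaluate at last coordinate: g 0 = 0
  have hg0 : g 0 = 0 := by
    have := hg' (Fin.last L)
    simp only [Finset.sum_apply, Pi.smul_apply, smul_eq_mul] at this
    rw [Fin.sum_univ_succ] at this
    simpa [hPibot] using this
  -- remaining coefficients
  have hrest : ∀ l : Fin L, g l.succ = 0 := by
    have hPv : P.mulVec (fun l => g l.succ) = 0 := by
      funext i
      have := hg' i.castSucc
      simp only [Finset.sum_apply, Pi.smul_apply, smul_eq_mul] at this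
      rw [Fin.sum_univ_succ, hg0] at this
      simp only [zero_mul, zero_add, Fin.cons_succ, hPitop] at this
      simpa [Matrix.mulVec, dotProduct, mul_comm] using this
    intro l
    by_contra h
    have hne : (fun l : Fin L => g l.succ) ≠ 0 := by
      intro h0
      exact h (congrFun h0 l)
    exact hPdet (Matrix.exists_mulVec_eq_zero_iff.mp ⟨_, hne, hPv⟩)
  intro i
  exact Fin.cases hg0 hrest i
end
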